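/- arXiv:math/0503508 — 3 statements merged into one kernel-verified Lean document; each statement's English description precedes it below -/
import Mathlib

section
/- With B(t) = ½ Σ_{i=1}^N |t − v_i| − ½ Σ_{i=1}^{N−1} |t − u_i| and L(t) the total length of the '−' intervals lying to the left of t (where the intervals (u_i, v_{i+1}) and (u_0, v_1) carry sign −), one has L(t) + B(t) = t/2 − u_0 for all t in the interval (u_0, u_N). -/
/-!
Since `|x| = 2 x⁺ - x` and `∑ vᵢ = ∑ uᵢ`, the normalisation turns `B` into
`B(t) = ∑ (t - vᵢ)⁺ - ∑ (t - uᵢ)⁺ - t / 2`. Because the points interleave, the positive parts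
that survive are exactly those of the points left of `t`, and then `L(t) + B(t)` telescopes to
`(t - u₀) - t / 2`.
-/

open Finset

/-- `B(t) = ½ Σ_{i=1}^N |t − v_i| − ½ Σ_{i=1}^{N−1} |t − u_i|`. -/
noncomputable def Bfun (N : ℕ) (u v : ℕ → ℝ) (t : ℝ) : ℝ :=
  (∑ i ∈ Finset.Icc 1 N, |t - v i|) / 2 - (∑ i ∈ Finset.Icc 1 (N - 1), |t - u i|) / 2

/-- `u₀, v₁, u₁, v₂, …` as one sequence, so that the interlacing hypothesis says exactly that it is
strictly increasing up to `u_N`. -/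
def interleave {α : Type*} (u v : ℕ → α) (n : ℕ) : α :=
  if Even n then u (n / 2) else v (n / 2 + 1)

section Interleave

variable {α : Type*} (u v : ℕ → α)

@[simp]
lemma interleave_two_mul (j : ℕ) : interleave u v (2 * j) = u j := by
  simp [interleave]

@[simp]
lemma interleave_two_mul_add_one (j : ℕ) : interleave u v (2 * j + 1) = v (j + 1) := by
  simp [interleave, Nat.add_div_of_dvd_right]

variable {u v}

lemma strictMonoOn_interleave [Preorder α] {N : ℕ}
    (h : ∀ i < N, u i < v (i + 1) ∧ v (i + 1) < u (i + 1)) :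
    StrictMonoOn (interleave u v) (Set.Iic (2 * N)) := by
  refine strictMonoOn_Iic_of_lt_succ fun m hm => ?_
  rw [Order.succ_eq_add_one]
  obtain ⟨j, rfl | rfl⟩ := Nat.even_or_odd' m
  · simpa using (h j (by omega)).1
  · simpa [show 2 * j + 1 + 1 = 2 * (j + 1) by ring] using (h j (by omega)).2

lemma interleave_le_interleave [Preorder α] {N : ℕ}
    (h : ∀ i < N, u i < v (i + 1) ∧ v (i + 1) < u (i + 1)) {a b : ℕ} (hab : a ≤ b)
    (hb : b ≤ 2 * N) : interleave u v a ≤ interleave u v b :=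
  (strictMonoOn_interleave h).monotoneOn (hab.trans hb) hb hab

end Interleave

lemma sum_range_posPart_eq_of_nonneg_of_nonpos {α : Type*} [AddCommGroup α] [LinearOrder α]
    [IsOrderedAddMonoid α] {f : ℕ → α} {k n : ℕ} (hkn : k ≤ n)
    (hpos : ∀ j < k, 0 ≤ f j) (hneg : ∀ j, k ≤ j → j < n → f j ≤ 0) :
    ∑ j ∈ range n, (f j)⁺ = ∑ j ∈ range k, f j := by
  rw [← sum_range_add_sum_Ico _ hkn]
  have hlow : ∑ j ∈ range k, (f j)⁺ = ∑ j ∈ range k, f j :=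
    sum_congr rfl fun j hj => posPart_of_nonneg (hpos j (mem_range.1 hj))
  have hhigh : ∑ j ∈ Ico k n, (f j)⁺ = 0 :=
    sum_eq_zero fun j hj => posPart_eq_zero.2 (hneg j (mem_Ico.1 hj).1 (mem_Ico.1 hj).2)
  rw [hlow, hhigh, add_zero]

lemma sum_Icc_one_eq_sum_range {M : Type*} [AddCommMonoid M] (f : ℕ → M) (n : ℕ) :
    ∑ i ∈ Icc 1 n, f i = ∑ i ∈ range n, f (i + 1) := by
  rw [range_eq_Ico, sum_Ico_add', zero_add, Ico_add_one_right_eq_Icc]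

lemma sum_range_sub_add_sum_range_sub {α : Type*} [AddCommGroup α] (u v : ℕ → α) (t : α)
    (n : ℕ) :
    ∑ j ∈ range n, (v (j + 1) - u j) + ∑ j ∈ range n, (t - v (j + 1))
      = ∑ j ∈ range n, (t - u j) := by
  rw [← sum_add_distrib]
  exact sum_congr rfl fun j _ => sub_add_sub_cancel' _ _ _

section Interlacing

variable {N : ℕ} {u v : ℕ → ℝ}

lemma Bfun_eq_sum_posPart (hN : 1 ≤ N)
    (hnorm : ∑ i ∈ Icc 1 N, v i = ∑ i ∈ Icc 1 (N - 1), u i) (t : ℝ) :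
    Bfun N u v t =
      ∑ j ∈ range N, (t - v (j + 1))⁺ - ∑ j ∈ range (N - 1), (t - u (j + 1))⁺ - t / 2 := by
  obtain ⟨M, rfl⟩ : ∃ M, N = M + 1 := ⟨N - 1, by omega⟩
  have habs (x : ℝ) : |x| = 2 * x⁺ - x := by
    linarith [abs_add_eq_two_nsmul_posPart x, two_nsmul x⁺]
  simp only [Bfun, Nat.add_sub_cancel, sum_Icc_one_eq_sum_range] at hnorm ⊢
  simp only [habs, sum_sub_distrib, ← mul_sum, sum_const, card_range, nsmul_eq_mul]
  push_cast
  linarith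

variable (hN : 1 ≤ N) (horder : ∀ i < N, u i < v (i + 1) ∧ v (i + 1) < u (i + 1))
  (hnorm : ∑ i ∈ Icc 1 N, v i = ∑ i ∈ Icc 1 (N - 1), u i)
include hN horder hnorm

lemma sum_add_Bfun_of_v_lt_of_lt_u {t : ℝ} {i : ℕ} (hi : 1 ≤ i) (hiN : i ≤ N)
    (hvt : v i < t) (htu : t < u i) :
    ∑ j ∈ range i, (v (j + 1) - u j) + Bfun N u v t = t / 2 - u 0 := by
  obtain ⟨k, rfl⟩ : ∃ k, i = k + 1 := ⟨i - 1, by omega⟩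
  rw [Bfun_eq_sum_posPart hN hnorm, sum_range_posPart_eq_of_nonneg_of_nonpos (k := k + 1) hiN,
    sum_range_posPart_eq_of_nonneg_of_nonpos (k := k) (by omega)]
  · linarith [sum_range_sub_add_sum_range_sub u v t (k + 1), sum_range_succ' (t - u ·) k]
  · intro j hj
    have := interleave_le_interleave horder (a := 2 * (j + 1)) (b := 2 * k + 1)
      (by omega) (by omega)
    simp only [interleave_two_mul, interleave_two_mul_add_one] at this
    linarith
  · intro j hkj hjN
    have := interleave_le_interleave horder (a := 2 * (k + 1)) (b := 2 * (j + 1))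
      (by omega) (by omega)
    simp only [interleave_two_mul] at this
    linarith
  · intro j hj
    have := interleave_le_interleave horder (a := 2 * j + 1) (b := 2 * k + 1)
      (by omega) (by omega)
    simp only [interleave_two_mul_add_one] at this
    linarith
  · intro j hkj hjN
    have := interleave_le_interleave horder (a := 2 * (k + 1)) (b := 2 * j + 1)
      (by omega) (by omega)
    simp only [interleave_two_mul, interleave_two_mul_add_one] at this
    linarith

lemma sum_add_Bfun_of_u_lt_of_lt_v {t : ℝ} {i : ℕ} (hiN : i < N)
    (hut : u i < t) (htv : t < v (i + 1)) :
    ∑ j ∈ range i, (v (j + 1) - u j) + (t - u i) + Bfun N u v t = t / 2 - u 0 := by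
  rw [Bfun_eq_sum_posPart hN hnorm, sum_range_posPart_eq_of_nonneg_of_nonpos (k := i) hiN.le,
    sum_range_posPart_eq_of_nonneg_of_nonpos (k := i) (by omega)]
  · linarith [sum_range_sub_add_sum_range_sub u v t i, sum_range_succ' (t - u ·) i,
      sum_range_succ (t - u ·) i]
  · intro j hj
    have := interleave_le_interleave horder (a := 2 * (j + 1)) (b := 2 * i)
      (by omega) (by omega)
    simp only [interleave_two_mul] at this
    linarith
  · intro j hij hjN
    have := interleave_le_interleave horder (a := 2 * i + 1) (b := 2 * (j + 1))
      (by omega) (by omega)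
    simp only [interleave_two_mul, interleave_two_mul_add_one] at this
    linarith
  · intro j hj
    have := interleave_le_interleave horder (a := 2 * j + 1) (b := 2 * i)
      (by omega) (by omega)
    simp only [interleave_two_mul, interleave_two_mul_add_one] at this
    linarith
  · intro j hij hjN
    have := interleave_le_interleave horder (a := 2 * i + 1) (b := 2 * j + 1)
      (by omega) (by omega)
    simp only [interleave_two_mul_add_one] at this
    linarith

end Interlacing

/-- With `L(t)` the total length of the '−' intervals to the left of `t`,
one has `L(t) + B(t) = t/2 − u₀` throughout `(u₀, u_N)`. -/
theorem L_add_B (N : ℕ) (hN : 1 ≤ N) (u v : ℕ → ℝ)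
    (horder : ∀ i < N, u i < v (i + 1) ∧ v (i + 1) < u (i + 1))
    (hnorm : ∑ i ∈ Finset.Icc 1 N, v i = ∑ i ∈ Finset.Icc 1 (N - 1), u i) :
    ∀ t : ℝ, u 0 < t → t < u N → ∀ i : ℕ,
      ((1 ≤ i → i ≤ N → v i < t → t < u i →
        (∑ j ∈ Finset.range i, (v (j + 1) - u j)) + Bfun N u v t = t / 2 - u 0) ∧
       (i < N → u i < t → t < v (i + 1) →
        (∑ j ∈ Finset.range i, (v (j + 1) - u j)) + (t - u i) + Bfun N u v t
          = t / 2 - u 0)) :=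
  fun _ _ _ _ => ⟨sum_add_Bfun_of_v_lt_of_lt_u hN horder hnorm,
    sum_add_Bfun_of_u_lt_of_lt_v hN horder hnorm⟩
end

section
/- Let f(z) = e^{U_0} · ∏_{i=0}^{N}(z e^{−U_i} − 1) / ∏_{i=1}^{N}(z e^{−V_i} − 1), where U_0 < V_1 < U_1 < ⋯ < V_N < U_N are real. Then for any real numbers a > 0 and b, the equation a z − b = f(z) has at least N − 2 real solutions; consequently, counted with multiplicity among its N complex roots, it has either N real roots or N − 2 real roots and one complex conjugate pair. -/
open Finset

/-- The numerator `e^{U₀} ∏_{i=0}^{N} (z e^{−U_i} − 1)` of `f`. -/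
noncomputable def numF (N : ℕ) (U : ℕ → ℝ) (z : ℝ) : ℝ :=
  Real.exp (U 0) * ∏ i ∈ Finset.range (N + 1), (z * Real.exp (-(U i)) - 1)

/-- The denominator `∏_{i=1}^{N} (z e^{−V_i} − 1)` of `f`. -/
noncomputable def denF (N : ℕ) (V : ℕ → ℝ) (z : ℝ) : ℝ :=
  ∏ i ∈ Finset.range N, (z * Real.exp (-(V (i + 1))) - 1)

noncomputable def numFC (N : ℕ) (U : ℕ → ℝ) (z : ℂ) : ℂ :=
  Complex.exp (U 0) * ∏ i ∈ Finset.range (N + 1), (z * Complex.exp (-(U i : ℂ)) - 1)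

noncomputable def denFC (N : ℕ) (V : ℕ → ℝ) (z : ℂ) : ℂ :=
  ∏ i ∈ Finset.range N, (z * Complex.exp (-(V (i + 1) : ℂ)) - 1)

open Polynomial
noncomputable def numP (N : ℕ) (U : ℕ → ℝ) : Polynomial ℝ :=
  C (Real.exp (U 0)) * ∏ i ∈ Finset.range (N + 1), (C (Real.exp (-(U i))) * X - 1)

noncomputable def denP (N : ℕ) (V : ℕ → ℝ) : Polynomial ℝ :=
  ∏ i ∈ Finset.range N, (C (Real.exp (-(V (i + 1)))) * X - 1)

lemma numP_eval (N : ℕ) (U : ℕ → ℝ) (z : ℝ) : (numP N U).eval z = numF N U z := by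
  simp only [numP, numF, eval_mul, eval_C, eval_prod, eval_sub, eval_one, eval_X]
  exact congrArg _ (Finset.prod_congr rfl (fun i _ => by ring))

lemma denP_eval (N : ℕ) (V : ℕ → ℝ) (z : ℝ) : (denP N V).eval z = denF N V z := by
  simp only [denP, denF, eval_prod, eval_sub, eval_one, eval_X, eval_mul, eval_C]
  exact Finset.prod_congr rfl (fun i _ => by ring)

lemma numP_aeval (N : ℕ) (U : ℕ → ℝ) (z : ℂ) : aeval z (numP N U) = numFC N U z := by
  simp only [numP, numFC, map_mul, map_prod, map_sub, map_one, aeval_C, aeval_X,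
    Complex.coe_algebraMap, ← Complex.ofReal_exp, ← Complex.ofReal_neg]
  exact congrArg _ (Finset.prod_congr rfl (fun i _ => by ring))

lemma denP_aeval (N : ℕ) (V : ℕ → ℝ) (z : ℂ) : aeval z (denP N V) = denFC N V z := by
  simp only [denP, denFC, map_prod, map_sub, map_one, map_mul, aeval_C, aeval_X,
    Complex.coe_algebraMap, ← Complex.ofReal_exp, ← Complex.ofReal_neg]
  exact Finset.prod_congr rfl (fun i _ => by ring)

lemma numP_natDegree (N : ℕ) (U : ℕ → ℝ) : (numP N U).natDegree ≤ N + 1 := by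
  refine le_trans (natDegree_mul_le) ?_
  simp only [natDegree_C, zero_add]
  refine le_trans (natDegree_prod_le _ _) ?_
  calc ∑ i ∈ Finset.range (N+1), (C (Real.exp (-(U i))) * X - 1).natDegree
      ≤ ∑ _i ∈ Finset.range (N+1), 1 := by
        refine Finset.sum_le_sum (fun i _ => ?_)
        refine le_trans (natDegree_sub_le _ _) ?_
        simp [natDegree_C_mul_le]
    _ = N + 1 := by simp

lemma denP_natDegree (N : ℕ) (V : ℕ → ℝ) : (denP N V).natDegree ≤ N := by
  refine le_trans (natDegree_prod_le _ _) ?_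
  calc ∑ i ∈ Finset.range N, (C (Real.exp (-(V (i+1)))) * X - 1).natDegree
      ≤ ∑ _i ∈ Finset.range N, 1 := by
        refine Finset.sum_le_sum (fun i _ => ?_)
        refine le_trans (natDegree_sub_le _ _) ?_
        simp [natDegree_C_mul_le]
    _ = N := by simp

section
variable {N : ℕ} {U V : ℕ → ℝ}

lemma Umono (horder : ∀ i < N, U i < V (i + 1) ∧ V (i + 1) < U (i + 1))
    {i j : ℕ} (hij : i ≤ j) (hj : j ≤ N) : U i ≤ U j := by
  induction j with
  | zero => simp_all
  | succ n ih =>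
    rcases Nat.eq_or_lt_of_le hij with h | h
    · exact le_of_eq (by rw [h])
    · have h1 : U i ≤ U n := ih (Nat.lt_succ_iff.mp h) (le_trans (Nat.le_succ n) hj)
      have h2 := horder n (Nat.lt_of_succ_le hj)
      linarith [h2.1, h2.2]

lemma UltV (horder : ∀ i < N, U i < V (i + 1) ∧ V (i + 1) < U (i + 1))
    {i j : ℕ} (hij : i < j) (hj : j ≤ N) : U i < V j := by
  have hj1 : 1 ≤ j := Nat.one_le_of_lt (Nat.lt_of_le_of_lt (Nat.zero_le i) hij)
  have h1 : U i ≤ U (j - 1) := Umono horder (by omega) (by omega)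
  have h2 := (horder (j - 1) (by omega)).1
  have : j - 1 + 1 = j := by omega
  rw [this] at h2
  linarith

lemma VltU (horder : ∀ i < N, U i < V (i + 1) ∧ V (i + 1) < U (i + 1))
    {i j : ℕ} (hj1 : 1 ≤ j) (hij : j ≤ i) (hi : i ≤ N) : V j < U i := by
  have h2 := (horder (j - 1) (by omega)).2
  have hjj : j - 1 + 1 = j := by omega
  rw [hjj] at h2
  have h1 : U j ≤ U i := Umono horder hij hi
  linarith

lemma Vmono (horder : ∀ i < N, U i < V (i + 1) ∧ V (i + 1) < U (i + 1))
    {i j : ℕ} (hi1 : 1 ≤ i) (hij : i ≤ j) (hj : j ≤ N) : V i ≤ V j := by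
  rcases Nat.eq_or_lt_of_le hij with h | h
  · exact le_of_eq (by rw [h])
  · have h1 : V i < U i := VltU horder hi1 le_rfl (by omega)
    have h2 : U i < V j := UltV horder h hj
    linarith

/-- The sign of the numerator at the `j`-th pole. -/
lemma sign_numF (horder : ∀ i < N, U i < V (i + 1) ∧ V (i + 1) < U (i + 1))
    {j : ℕ} (hj1 : 1 ≤ j) (hjN : j ≤ N) :
    0 < (-1 : ℝ) ^ (N + 1 - j) * numF N U (Real.exp (V j)) := by
  set t : ℕ → ℝ := fun i => Real.exp (V j) * Real.exp (-(U i)) - 1 with ht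
  have hsplit : (∏ i ∈ Finset.range (N+1), t i)
      = (∏ i ∈ Finset.range j, t i) * ∏ i ∈ Finset.Ico j (N+1), t i :=
    (Finset.prod_range_mul_prod_Ico _ (by omega)).symm
  have hpos : ∀ i ∈ Finset.range j, 0 < t i := by
    intro i hi
    have h0 : U i < V j := UltV horder (Finset.mem_range.mp hi) hjN
    have h1 : Real.exp (U i) < Real.exp (V j) := Real.exp_lt_exp.mpr h0
    rw [ht]
    simp only [sub_pos, Real.exp_neg, ← div_eq_mul_inv]
    rw [lt_div_iff₀ (Real.exp_pos _), one_mul]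
    exact h1
  have hneg : ∀ i ∈ Finset.Ico j (N+1), t i < 0 := by
    intro i hi
    rcases Finset.mem_Ico.mp hi with ⟨hji, hiN⟩
    have h0 : V j < U i := VltU horder hj1 hji (by omega)
    have h1 : Real.exp (V j) < Real.exp (U i) := Real.exp_lt_exp.mpr h0
    simp only [ht, sub_neg, Real.exp_neg, ← div_eq_mul_inv]
    rw [div_lt_one (Real.exp_pos _)]
    exact h1
  have hP : 0 < ∏ i ∈ Finset.range j, t i := Finset.prod_pos hpos
  have hQ : 0 < ∏ i ∈ Finset.Ico j (N+1), -(t i) :=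
    Finset.prod_pos (fun i hi => neg_pos.mpr (hneg i hi))
  have hIco : (∏ i ∈ Finset.Ico j (N+1), t i)
      = (-1:ℝ) ^ (N + 1 - j) * ∏ i ∈ Finset.Ico j (N+1), -(t i) := by
    rw [← Nat.card_Ico j (N+1), ← Finset.prod_const, ← Finset.prod_mul_distrib]
    exact Finset.prod_congr rfl (fun i _ => by ring)
  have hsq : ((-1:ℝ) ^ (N + 1 - j)) * ((-1:ℝ) ^ (N + 1 - j)) = 1 := by
    rw [← mul_pow]; norm_num
  have hnum : numF N U (Real.exp (V j))
      = Real.exp (U 0) * ((∏ i ∈ Finset.range j, t i)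
        * ((-1:ℝ) ^ (N + 1 - j) * ∏ i ∈ Finset.Ico j (N+1), -(t i))) := by
    rw [numF, hsplit, hIco]
  rw [hnum]
  have he := Real.exp_pos (U 0)
  calc (0:ℝ) < (((-1:ℝ) ^ (N + 1 - j)) * ((-1:ℝ) ^ (N + 1 - j)))
        * (Real.exp (U 0) * ((∏ i ∈ Finset.range j, t i)
          * ∏ i ∈ Finset.Ico j (N+1), -(t i))) := by
        rw [hsq, one_mul]; positivity
    _ = (-1:ℝ) ^ (N + 1 - j) * (Real.exp (U 0) * ((∏ i ∈ Finset.range j, t i)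
        * ((-1:ℝ) ^ (N + 1 - j) * ∏ i ∈ Finset.Ico j (N+1), -(t i)))) := by ring
end

lemma exists_root_Ioo {f : ℝ → ℝ} (hf : Continuous f) {x y : ℝ} (hxy : x < y)
    (h : f x * f y < 0) : ∃ z ∈ Set.Ioo x y, f z = 0 := by
  rcases mul_neg_iff.mp h with ⟨hx, hy⟩ | ⟨hx, hy⟩
  · have := intermediate_value_Ioo' hxy.le hf.continuousOn
      (show (0:ℝ) ∈ Set.Ioo (f y) (f x) from ⟨hy, hx⟩)
    rcases this with ⟨z, hz, hz0⟩
    exact ⟨z, hz, hz0⟩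
  · have := intermediate_value_Ioo hxy.le hf.continuousOn
      (show (0:ℝ) ∈ Set.Ioo (f x) (f y) from ⟨hx, hy⟩)
    rcases this with ⟨z, hz, hz0⟩
    exact ⟨z, hz, hz0⟩

lemma denF_eval_pole (N : ℕ) (V : ℕ → ℝ) {j : ℕ} (hj1 : 1 ≤ j) (hjN : j ≤ N) :
    denF N V (Real.exp (V j)) = 0 := by
  apply Finset.prod_eq_zero (Finset.mem_range.mpr (show j - 1 < N by omega))
  have : j - 1 + 1 = j := by omega
  rw [this, ← Real.exp_add]
  simp

lemma denF_ne_zero (N : ℕ) (V : ℕ → ℝ) {z : ℝ}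
    (h : ∀ j, 1 ≤ j → j ≤ N → z ≠ Real.exp (V j)) : denF N V z ≠ 0 := by
  rw [denF]
  apply Finset.prod_ne_zero_iff.mpr
  intro i hi
  intro hc
  have him := Finset.mem_range.mp hi
  apply h (i+1) (by omega) (by omega)
  have h2 : z * Real.exp (-(V (i+1))) = 1 := by linarith [hc]
  have h3 := Real.exp_pos (V (i + 1))
  rw [Real.exp_neg] at h2
  field_simp at h2
  exact h2



/-- For interlacing `U₀ < V₁ < U₁ < ⋯ < V_N < U_N` and any line `a z − b` with
`a > 0`, the equation `a z − b = f(z)` has at least `N − 2` real solutions, and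
(after clearing denominators) it has at most two nonreal complex roots, which
form a conjugate pair. -/
theorem realroots (N : ℕ) (U V : ℕ → ℝ)
    (horder : ∀ i < N, U i < V (i + 1) ∧ V (i + 1) < U (i + 1))
    (a b : ℝ) (ha : 0 < a) :
    N - 2 ≤ {z : ℝ | denF N V z ≠ 0 ∧ a * z - b = numF N U z / denF N V z}.ncard ∧
    {z : ℂ | z.im ≠ 0 ∧ ((a : ℂ) * z - (b : ℂ)) * denFC N V z = numFC N U z}.ncard ≤ 2 ∧
    (∀ z : ℂ, z.im ≠ 0 → ((a : ℂ) * z - (b : ℂ)) * denFC N V z = numFC N U z →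
      ((a : ℂ) * (starRingEnd ℂ z) - (b : ℂ)) * denFC N V (starRingEnd ℂ z)
        = numFC N U (starRingEnd ℂ z)) := by
  classical
  set P : Polynomial ℝ := numP N U - (C a * X - C b) * denP N V with hPdef
  have hPeval : ∀ z : ℝ, P.eval z = numF N U z - (a * z - b) * denF N V z := by
    intro z
    simp [hPdef, numP_eval, denP_eval]
  have hPdeg : P.natDegree ≤ N + 1 := by
    refine le_trans (natDegree_sub_le _ _) ?_
    refine max_le (numP_natDegree N U) ?_
    refine le_trans (natDegree_mul_le) ?_
    have h1 : (C a * X - C b).natDegree ≤ 1 := by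
      refine le_trans (natDegree_sub_le _ _) ?_
      refine max_le ?_ (by simp)
      exact le_trans (natDegree_C_mul_le _ _) (by simp)
    have h2 := denP_natDegree N V
    omega
  have hPcont : Continuous (fun z => P.eval z) := P.continuous
  have hPpole : ∀ j, 1 ≤ j → j ≤ N →
      P.eval (Real.exp (V j)) = numF N U (Real.exp (V j)) := by
    intro j h1 h2
    rw [hPeval, denF_eval_pole N V h1 h2]
    ring
  -- roots between consecutive poles
  have hroot : ∀ k, ∃ z : ℝ, k < N - 1 →
      z ∈ Set.Ioo (Real.exp (V (k+1))) (Real.exp (V (k+2))) ∧ P.eval z = 0 := by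
    intro k
    by_cases hk : k < N - 1
    · have h1 := sign_numF horder (j := k+1) (by omega) (by omega)
      have h2 := sign_numF horder (j := k+2) (by omega) (by omega)
      set m := N - 1 - k with hm
      have e1 : N + 1 - (k+1) = m + 1 := by omega
      have e2 : N + 1 - (k+2) = m := by omega
      rw [e1] at h1
      rw [e2] at h2
      have hVk : V (k+1) < V (k+2) := by
        have hA : V (k+1) < U (k+1) := (horder k (by omega)).2
        have hB : U (k+1) < V (k+2) := (horder (k+1) (by omega)).1
        linarith
      have hxy : Real.exp (V (k+1)) < Real.exp (V (k+2)) := Real.exp_lt_exp.mpr hVk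
      have hprod : P.eval (Real.exp (V (k+1))) * P.eval (Real.exp (V (k+2))) < 0 := by
        rw [hPpole (k+1) (by omega) (by omega), hPpole (k+2) (by omega) (by omega)]
        set s1 := numF N U (Real.exp (V (k+1)))
        set s2 := numF N U (Real.exp (V (k+2)))
        have hsq : ((-1:ℝ)^m) * ((-1:ℝ)^m) = 1 := by rw [← mul_pow]; norm_num
        have hn : (-1:ℝ)^m * s1 < 0 := by
          rw [pow_succ] at h1
          nlinarith
        calc s1 * s2 = (((-1:ℝ)^m) * ((-1:ℝ)^m)) * (s1 * s2) := by rw [hsq, one_mul]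
          _ = ((-1:ℝ)^m * s1) * ((-1:ℝ)^m * s2) := by ring
          _ < 0 := mul_neg_of_neg_of_pos hn h2
      rcases exists_root_Ioo hPcont hxy hprod with ⟨z, hz1, hz2⟩
      exact ⟨z, fun _ => ⟨hz1, hz2⟩⟩
    · exact ⟨0, fun h => absurd h hk⟩
  choose x hx using hroot
  have hlt : ∀ k k', k < k' → k' < N - 1 → x k < x k' := by
    intro k k' hkk' hk'
    have h1 := (hx k (by omega)).1
    have h2 := (hx k' hk').1
    have h3 : Real.exp (V (k+2)) ≤ Real.exp (V (k'+1)) :=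
      Real.exp_le_exp.mpr (Vmono horder (by omega) (by omega) (by omega))
    exact lt_of_lt_of_le h1.2 (le_trans h3 h2.1.le)
  have hinj : Set.InjOn x ↑(Finset.range (N-1)) := by
    intro k hk k' hk' heq
    simp only [Finset.coe_range, Set.mem_Iio] at hk hk'
    by_contra hne
    rcases Nat.lt_or_ge k k' with h | h
    · linarith [hlt k k' h hk']
    · have h' : k' < k := by omega
      linarith [hlt k' k h' hk]
  set Tfin : Finset ℝ := (Finset.range (N-1)).image x with hTfin
  have hcard : Tfin.card = N - 1 := by
    rw [hTfin, Finset.card_image_of_injOn hinj, Finset.card_range]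
  set S : Set ℝ := {z : ℝ | denF N V z ≠ 0 ∧ a * z - b = numF N U z / denF N V z} with hS
  have hTS : ↑Tfin ⊆ S := by
    intro z hz
    rcases Finset.mem_image.mp (by exact_mod_cast hz) with ⟨k, hk, rfl⟩
    have hkN : k < N - 1 := Finset.mem_range.mp hk
    have hIoo := (hx k hkN).1
    have hev := (hx k hkN).2
    have hden : denF N V (x k) ≠ 0 := by
      apply denF_ne_zero
      intro j hj1 hjN heq
      rcases Nat.lt_or_ge j (k+2) with h | h
      · have : Real.exp (V j) ≤ Real.exp (V (k+1)) :=
          Real.exp_le_exp.mpr (Vmono horder hj1 (by omega) (by omega))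
        linarith [hIoo.1]
      · have : Real.exp (V (k+2)) ≤ Real.exp (V j) :=
          Real.exp_le_exp.mpr (Vmono horder (by omega) h hjN)
        linarith [hIoo.2]
    refine ⟨hden, ?_⟩
    rw [eq_div_iff hden]
    have := hPeval (x k)
    rw [hev] at this
    linarith
  have hSsub : S ⊆ {z : ℝ | P.IsRoot z} := by
    intro z hz
    have h1 : numF N U z = (a * z - b) * denF N V z := by
      have := hz.2
      rw [eq_div_iff hz.1] at this
      linarith
    simp only [Set.mem_setOf_eq, IsRoot]
    rw [hPeval, h1]
    ring
  -- the complex polynomial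
  set Q : Polynomial ℂ := P.map (algebraMap ℝ ℂ) with hQdef
  have hQeval : ∀ z : ℂ, Q.eval z = numFC N U z - ((a:ℂ) * z - (b:ℂ)) * denFC N V z := by
    intro z
    rw [hQdef, eval_map, ← aeval_def, hPdef]
    simp only [map_sub, map_mul, numP_aeval, denP_aeval, aeval_C, aeval_X,
      Complex.coe_algebraMap]
  refine ⟨?_, ?_, ?_⟩
  · -- real part
    rcases Nat.lt_or_ge N 3 with hN | hN
    · have : N - 2 = 0 := by omega
      rw [this]
      exact Nat.zero_le _
    · have hPne : P ≠ 0 := by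
        intro h0
        have h1 := sign_numF horder (j := 1) le_rfl (by omega)
        have h2 := hPpole 1 le_rfl (by omega)
        rw [h0, eval_zero] at h2
        rw [← h2] at h1
        simp at h1
      have hSfin : S.Finite := Set.Finite.subset (Polynomial.finite_setOf_isRoot hPne) hSsub
      calc N - 2 ≤ N - 1 := by omega
        _ = (↑Tfin : Set ℝ).ncard := by rw [Set.ncard_coe_finset, hcard]
        _ ≤ S.ncard := Set.ncard_le_ncard hTS hSfin
  · -- complex count
    set S₂ : Set ℂ := {z : ℂ | z.im ≠ 0 ∧ ((a:ℂ) * z - (b:ℂ)) * denFC N V z = numFC N U z}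
      with hS2
    by_cases hP0 : P = 0
    · have hQ0 : Q = 0 := by rw [hQdef, hP0, Polynomial.map_zero]
      have hSeq : S₂ = {z : ℂ | z.im ≠ 0} := by
        ext z
        simp only [hS2, Set.mem_setOf_eq, and_iff_left_iff_imp]
        intro _
        have := hQeval z
        rw [hQ0, eval_zero] at this
        linear_combination this
      have hinf : {z : ℂ | z.im ≠ 0}.Infinite := by
        apply Set.infinite_of_injective_forall_mem
          (f := fun n : ℕ => Complex.I * ((n:ℂ) + 1))
        · intro n m hnm
          have h1 := mul_left_cancel₀ Complex.I_ne_zero hnm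
          have h2 : n + 1 = m + 1 := by exact_mod_cast h1
          omega
        · intro n
          simp only [Set.mem_setOf_eq]
          have him : (Complex.I * ((n:ℂ) + 1)).im = (n:ℝ) + 1 := by
            simp [Complex.mul_im]
          rw [him]
          positivity
      rw [hSeq, hinf.ncard]
      omega
    · have hQne : Q ≠ 0 := by
        rw [hQdef]
        exact (Polynomial.map_ne_zero_iff (algebraMap ℝ ℂ).injective).mpr hP0
      set R : Set ℂ := {z : ℂ | Q.IsRoot z} with hR
      have hRfin : R.Finite := Polynomial.finite_setOf_isRoot hQne
      have hS2R : S₂ ⊆ R := by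
        intro z hz
        simp only [hR, Set.mem_setOf_eq, IsRoot]
        rw [hQeval z, hz.2]
        ring
      set T' : Set ℂ := (fun r : ℝ => (r : ℂ)) '' ↑Tfin with hT'
      have hT'R : T' ⊆ R := by
        rintro z ⟨r, hr, rfl⟩
        have hroot : P.eval r = 0 := hSsub (hTS hr)
        simp only [hR, Set.mem_setOf_eq, IsRoot]
        have : Q.eval ((algebraMap ℝ ℂ) r) = (algebraMap ℝ ℂ) (P.eval r) := by
          rw [hQdef, eval_map, eval₂_at_apply]
        rw [Complex.coe_algebraMap] at this
        rw [this, hroot]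
        simp
      have hdisj : Disjoint S₂ T' := by
        rw [Set.disjoint_left]
        rintro z hz ⟨r, _, rfl⟩
        exact hz.1 (Complex.ofReal_im r)
      have hcardT' : T'.ncard = N - 1 := by
        rw [hT', Set.ncard_image_of_injective _ Complex.ofReal_injective,
          Set.ncard_coe_finset, hcard]
      have hRcard : R.ncard ≤ N + 1 := by
        have h1 : R = ↑Q.roots.toFinset := by
          ext z
          simp [hR, Multiset.mem_toFinset, mem_roots, hQne, IsRoot]
        rw [h1, Set.ncard_coe_finset]
        calc Q.roots.toFinset.card ≤ Multiset.card Q.roots := Q.roots.toFinset_card_le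
          _ ≤ Q.natDegree := Q.card_roots'
          _ ≤ P.natDegree := natDegree_map_le
          _ ≤ N + 1 := hPdeg
      have hunion : (S₂ ∪ T').ncard = S₂.ncard + T'.ncard :=
        Set.ncard_union_eq hdisj (hRfin.subset hS2R) (hRfin.subset hT'R)
      have hle : (S₂ ∪ T').ncard ≤ R.ncard :=
        Set.ncard_le_ncard (Set.union_subset hS2R hT'R) hRfin
      omega
  · -- conjugation
    intro z _ h
    have hc := congrArg (starRingEnd ℂ) h
    simp only [numFC, denFC, map_mul, map_sub, map_prod, map_one, map_neg,
      Complex.conj_ofReal, ← Complex.exp_conj] at hc ⊢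
    exact hc
end

section
/- Let S(z) satisfy z S'(z) = −χ − ln(z e^{−τ/2} − e^{τ/2}) + ln f(z) on a domain where all quantities are positive. If z_0 is a point with S'(z_0) = S''(z_0) = S'''(z_0) = 0 (a triple critical point), then (z d/dz)⁴ S(z)|_{z_0} = z_0³ f'''(z_0)/f(z_0). -/
open Filter

/-- The Euler operator `z d/dz`. -/
noncomputable def eulerOp (g : ℝ → ℝ) : ℝ → ℝ := fun z => z * deriv g z

private lemma contDiffAt_deriv_succ {m : ℕ} {S : ℝ → ℝ} {x : ℝ}
    (h : ContDiffAt ℝ (m + 1 : ℕ) S x) : ContDiffAt ℝ m (deriv S) x := by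
  obtain ⟨u, hu, hSu⟩ := h.contDiffOn le_rfl (by simp)
  obtain ⟨v, hvu, hvo, hxv⟩ := mem_nhds_iff.1 hu
  exact ((hSu.mono hvu).deriv_of_isOpen hvo (by exact_mod_cast le_refl (m+1))).contDiffAt
    (hvo.mem_nhds hxv)

private lemma eulerOp_congr {F G : ℝ → ℝ} {x : ℝ} (h : F =ᶠ[nhds x] G) :
    eulerOp F =ᶠ[nhds x] eulerOp G := by
  filter_upwards [h.deriv] with z hz
  simp only [eulerOp, hz]

/-- If `z S'(z) = −χ − ln(z e^{−τ/2} − e^{τ/2}) + ln f(z)` near `z₀` and `z₀`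
is a triple critical point of `S`, then `(z d/dz)⁴ S |_{z₀} = z₀³ f'''(z₀)/f(z₀)`. -/
theorem euler_fourth_derivative_at_triple_point (S f : ℝ → ℝ) (χ τ z₀ : ℝ)
    (hf : ContDiff ℝ (⊤ : ℕ∞) f)
    (hS : ContDiffAt ℝ 4 S z₀)
    (hrel : ∀ᶠ z in nhds z₀,
      z * deriv S z =
        -χ - Real.log (z * Real.exp (-(τ / 2)) - Real.exp (τ / 2)) + Real.log (f z))
    (hpos : 0 < z₀ * Real.exp (-(τ / 2)) - Real.exp (τ / 2))
    (hf0 : 0 < f z₀)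
    (h1 : deriv S z₀ = 0) (h2 : iteratedDeriv 2 S z₀ = 0)
    (h3 : iteratedDeriv 3 S z₀ = 0) :
    eulerOp^[4] S z₀ = z₀ ^ 3 * iteratedDeriv 3 f z₀ / f z₀ := by
  set a : ℝ := Real.exp (-(τ / 2)) with ha
  set b : ℝ := Real.exp (τ / 2) with hb
  set g : ℝ → ℝ := fun z => -χ - Real.log (z * a - b) + Real.log (f z) with hg
  set f1 : ℝ → ℝ := deriv f with hf1def
  set f2 : ℝ → ℝ := deriv f1 with hf2def
  set f3 : ℝ → ℝ := deriv f2 with hf3def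
  have hfi : ContDiff ℝ (((⊤ : ℕ∞)) : WithTop ℕ∞) f := hf.of_le (by simp)
  have hf1 : ContDiff ℝ (((⊤ : ℕ∞)) : WithTop ℕ∞) f1 := (contDiff_infty_iff_deriv.mp hfi).2
  have hf2 : ContDiff ℝ (((⊤ : ℕ∞)) : WithTop ℕ∞) f2 := (contDiff_infty_iff_deriv.mp hf1).2
  have hf3 : ContDiff ℝ (((⊤ : ℕ∞)) : WithTop ℕ∞) f3 := (contDiff_infty_iff_deriv.mp hf2).2
  set d1 : ℝ → ℝ := fun z => f1 z / f z - a / (z * a - b) with hd1def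
  set d2 : ℝ → ℝ := fun z => f2 z / f z - (f1 z / f z) ^ 2 + (a / (z * a - b)) ^ 2 with hd2def
  set d3 : ℝ → ℝ := fun z => f3 z / f z - 3 * f2 z * f1 z / (f z) ^ 2
      + 2 * (f1 z / f z) ^ 3 - 2 * (a / (z * a - b)) ^ 3 with hd3def
  -- neighborhood positivity
  have hcu : ContinuousAt (fun z : ℝ => z * a - b) z₀ := by fun_prop
  have hVu : ∀ᶠ z in nhds z₀, 0 < z * a - b := hcu.eventually (eventually_gt_nhds hpos)
  have hVf : ∀ᶠ z in nhds z₀, 0 < f z :=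
    (hf.continuous.continuousAt).eventually (eventually_gt_nhds hf0)
  -- derivative of the affine map
  have hu' : ∀ z : ℝ, HasDerivAt (fun z : ℝ => z * a - b) a z := fun z => by
    simpa using ((hasDerivAt_id z).mul_const a).sub_const b
  -- (A) derivative of g
  have hgd : ∀ z : ℝ, 0 < z * a - b → 0 < f z → HasDerivAt g (d1 z) z := by
    intro z hz1 hz2
    have hlog1 : HasDerivAt (fun z : ℝ => Real.log (z * a - b)) (a / (z * a - b)) z :=
      (hu' z).log (ne_of_gt hz1)
    have hfd : HasDerivAt f (f1 z) z := (hfi.differentiable (by norm_num) z).hasDerivAt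
    have hlog2 : HasDerivAt (fun z : ℝ => Real.log (f z)) (f1 z / f z) z :=
      hfd.log (ne_of_gt hz2)
    have := ((hasDerivAt_const z (-χ)).sub hlog1).add hlog2
    refine this.congr_deriv ?_
    simp [hd1def]; ring
  -- (B) derivative of d1
  have hd1d : ∀ z : ℝ, 0 < z * a - b → 0 < f z → HasDerivAt d1 (d2 z) z := by
    intro z hz1 hz2
    have hfd : HasDerivAt f (f1 z) z := (hfi.differentiable (by norm_num) z).hasDerivAt
    have hf1d : HasDerivAt f1 (f2 z) z := (hf1.differentiable (by norm_num) z).hasDerivAt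
    have hq : HasDerivAt (fun z : ℝ => f1 z / f z)
        ((f2 z * f z - f1 z * f1 z) / (f z) ^ 2) z := hf1d.div hfd (ne_of_gt hz2)
    have hr : HasDerivAt (fun z : ℝ => a / (z * a - b))
        ((0 * (z * a - b) - a * a) / (z * a - b) ^ 2) z :=
      (hasDerivAt_const z a).div (hu' z) (ne_of_gt hz1)
    have := hq.sub hr
    refine this.congr_deriv ?_
    simp only [hd2def]; field_simp
    ring
  -- (C) derivative of d2
  have hd2d : ∀ z : ℝ, 0 < z * a - b → 0 < f z → HasDerivAt d2 (d3 z) z := by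
    intro z hz1 hz2
    have hfd : HasDerivAt f (f1 z) z := (hfi.differentiable (by norm_num) z).hasDerivAt
    have hf1d : HasDerivAt f1 (f2 z) z := (hf1.differentiable (by norm_num) z).hasDerivAt
    have hf2d : HasDerivAt f2 (f3 z) z := (hf2.differentiable (by norm_num) z).hasDerivAt
    have hq1 : HasDerivAt (fun z : ℝ => f2 z / f z)
        ((f3 z * f z - f2 z * f1 z) / (f z) ^ 2) z := hf2d.div hfd (ne_of_gt hz2)
    have hq : HasDerivAt (fun z : ℝ => f1 z / f z)
        ((f2 z * f z - f1 z * f1 z) / (f z) ^ 2) z := hf1d.div hfd (ne_of_gt hz2)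
    have hq2 : HasDerivAt (fun z : ℝ => (f1 z / f z) ^ 2)
        (2 * (f1 z / f z) ^ 1 * ((f2 z * f z - f1 z * f1 z) / (f z) ^ 2)) z := by
      exact (hq.pow 2).congr_deriv (by simp)
    have hr : HasDerivAt (fun z : ℝ => a / (z * a - b))
        ((0 * (z * a - b) - a * a) / (z * a - b) ^ 2) z :=
      (hasDerivAt_const z a).div (hu' z) (ne_of_gt hz1)
    have hr2 : HasDerivAt (fun z : ℝ => (a / (z * a - b)) ^ 2)
        (2 * (a / (z * a - b)) ^ 1 * ((0 * (z * a - b) - a * a) / (z * a - b) ^ 2)) z := by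
      exact (hr.pow 2).congr_deriv (by simp)
    have := (hq1.sub hq2).add hr2
    refine this.congr_deriv ?_
    simp only [hd3def]; field_simp
    ring
  -- S-side derivative regularity
  have hS3 : ContDiffAt ℝ 3 (deriv S) z₀ := by
    have : ContDiffAt ℝ ((3 : ℕ) + 1 : ℕ) S z₀ := by exact_mod_cast hS
    exact_mod_cast contDiffAt_deriv_succ this
  have hS2 : ContDiffAt ℝ 2 (deriv (deriv S)) z₀ := by
    have : ContDiffAt ℝ ((2 : ℕ) + 1 : ℕ) (deriv S) z₀ := by exact_mod_cast hS3
    exact_mod_cast contDiffAt_deriv_succ this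
  have hSd1 : DifferentiableAt ℝ (deriv S) z₀ := hS3.differentiableAt (by norm_num)
  have hSd2 : DifferentiableAt ℝ (deriv (deriv S)) z₀ := hS2.differentiableAt (by norm_num)
  have hiter2 : deriv (deriv S) z₀ = 0 := by
    rw [show deriv (deriv S) z₀ = iteratedDeriv 2 S z₀ by
      simp [iteratedDeriv_succ, iteratedDeriv_one]]
    exact h2
  have hiter3 : deriv (deriv (deriv S)) z₀ = 0 := by
    rw [show deriv (deriv (deriv S)) z₀ = iteratedDeriv 3 S z₀ by
      simp [iteratedDeriv_succ, iteratedDeriv_one]]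
    exact h3
  -- eulerOp S agrees with g near z₀
  have hrelEq : eulerOp S =ᶠ[nhds z₀] g := by
    filter_upwards [hrel] with z hz
    simpa [eulerOp, hg] using hz
  -- deriv g = d1 near z₀
  have hdg : deriv g =ᶠ[nhds z₀] d1 := by
    filter_upwards [hVu, hVf] with z hz1 hz2
    exact (hgd z hz1 hz2).deriv
  -- d1 z₀ = 0
  have hESd : HasDerivAt (eulerOp S) (deriv S z₀ + z₀ * deriv (deriv S) z₀) z₀ := by
    have := (hasDerivAt_id z₀).mul (hSd1.hasDerivAt)
    exact this.congr_deriv (by simp)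
  have hd1z : d1 z₀ = 0 := by
    have e1 : deriv (eulerOp S) z₀ = deriv g z₀ := hrelEq.deriv.eq_of_nhds
    have e2 : deriv g z₀ = d1 z₀ := hdg.eq_of_nhds
    rw [← e2, ← e1, hESd.deriv, h1, hiter2]
    ring
  -- d2 z₀ = 0
  have hd2z : d2 z₀ = 0 := by
    -- d1 =ᶠ deriv (eulerOp S) =ᶠ fun z => deriv S z + z * deriv (deriv S) z
    have hSev : ∀ᶠ z in nhds z₀, DifferentiableAt ℝ (deriv S) z := by
      have h4 : ∀ᶠ z in nhds z₀, ContDiffAt ℝ 4 S z := hS.eventually (by simp)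
      filter_upwards [h4] with z hz
      have : ContDiffAt ℝ ((3 : ℕ) + 1 : ℕ) S z := by exact_mod_cast hz
      exact (contDiffAt_deriv_succ this).differentiableAt (by norm_num)
    have hEder : (fun z => deriv (eulerOp S) z) =ᶠ[nhds z₀]
        (fun z => deriv S z + z * deriv (deriv S) z) := by
      filter_upwards [hSev] with z hz
      have : HasDerivAt (eulerOp S) (deriv S z + z * deriv (deriv S) z) z := by
        have := (hasDerivAt_id z).mul hz.hasDerivAt
        exact this.congr_deriv (by simp)
      exact this.deriv
    have hd1ev : d1 =ᶠ[nhds z₀] (fun z => deriv S z + z * deriv (deriv S) z) :=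
      hdg.symm.trans (hrelEq.deriv.symm.trans hEder)
    have hRHSd : HasDerivAt (fun z => deriv S z + z * deriv (deriv S) z)
        (deriv (deriv S) z₀ + (deriv (deriv S) z₀ + z₀ * deriv (deriv (deriv S)) z₀)) z₀ := by
      have := hSd1.hasDerivAt.add ((hasDerivAt_id z₀).mul hSd2.hasDerivAt)
      refine this.congr_deriv ?_
      simp only [id_eq, one_mul]
    have hderiv_d1 : deriv d1 z₀ =
        deriv (deriv S) z₀ + (deriv (deriv S) z₀ + z₀ * deriv (deriv (deriv S)) z₀) := by
      rw [hd1ev.deriv.eq_of_nhds, hRHSd.deriv]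
    have hd1has : HasDerivAt d1 (d2 z₀) z₀ := hd1d z₀ hpos hf0
    rw [hd1has.deriv] at hderiv_d1
    rw [hderiv_d1, hiter2, hiter3]
    ring
  -- f-side consequences
  have hfne : f z₀ ≠ 0 := ne_of_gt hf0
  have hune : z₀ * a - b ≠ 0 := ne_of_gt hpos
  have hc : f1 z₀ / f z₀ = a / (z₀ * a - b) := by
    have := hd1z
    simp only [hd1def] at this
    linarith
  have hf2z : f2 z₀ = 0 := by
    have := hd2z
    simp only [hd2def, hc] at this
    have h0 : f2 z₀ / f z₀ = 0 := by linarith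
    field_simp at h0
    simpa using h0
  have hd3z : d3 z₀ = f3 z₀ / f z₀ := by
    simp only [hd3def, hf2z, hc]
    ring
  -- assembly of the iterated Euler operator
  have E1 : eulerOp S =ᶠ[nhds z₀] g := hrelEq
  have E2 : eulerOp^[2] S =ᶠ[nhds z₀] (fun z => z * d1 z) := by
    have : eulerOp^[2] S =ᶠ[nhds z₀] eulerOp g := by
      rw [show eulerOp^[2] S = eulerOp (eulerOp S) from rfl]
      exact eulerOp_congr E1
    refine this.trans ?_
    filter_upwards [hdg] with z hz
    simp [eulerOp, hz]
  have hG1d : ∀ᶠ z in nhds z₀, HasDerivAt (fun z => z * d1 z) (d1 z + z * d2 z) z := by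
    filter_upwards [hVu, hVf] with z hz1 hz2
    have := (hasDerivAt_id z).mul (hd1d z hz1 hz2)
    exact this.congr_deriv (by simp)
  have E3 : eulerOp^[3] S =ᶠ[nhds z₀] (fun z => z * d1 z + z ^ 2 * d2 z) := by
    have h0 : eulerOp^[3] S =ᶠ[nhds z₀] eulerOp (fun z => z * d1 z) := by
      rw [show eulerOp^[3] S = eulerOp (eulerOp^[2] S) from rfl]
      exact eulerOp_congr E2
    refine h0.trans ?_
    filter_upwards [hG1d] with z hz
    rw [show eulerOp (fun z => z * d1 z) z = z * deriv (fun z => z * d1 z) z from rfl, hz.deriv]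
    ring
  have E4 : eulerOp^[4] S z₀ = z₀ * deriv (fun z => z * d1 z + z ^ 2 * d2 z) z₀ := by
    rw [show eulerOp^[4] S = eulerOp (eulerOp^[3] S) from rfl]
    have := eulerOp_congr E3
    rw [this.eq_of_nhds]
    rfl
  have hG2d : HasDerivAt (fun z => z * d1 z + z ^ 2 * d2 z)
      (d1 z₀ + z₀ * d2 z₀ + (2 * z₀ * d2 z₀ + z₀ ^ 2 * d3 z₀)) z₀ := by
    have hA := (hasDerivAt_id z₀).mul (hd1d z₀ hpos hf0)
    have hB := (hasDerivAt_pow 2 z₀).mul (hd2d z₀ hpos hf0)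
    have := hA.add hB
    refine this.congr_deriv ?_
    simp only [id_eq, one_mul, pow_one]
    norm_num
  rw [E4, hG2d.deriv, hd1z, hd2z, hd3z]
  have hit3 : iteratedDeriv 3 f z₀ = f3 z₀ := by
    simp [iteratedDeriv_succ, iteratedDeriv_one, hf3def, hf2def, hf1def]
  rw [hit3]
  ring
end
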